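/- Let X, X₁ be binary, S, N independent binary with Y₁ = X₁ ⊕ S, H(S) = 1, and let U, A, V, Y, S_d = S, Ŝ_d be random variables with Ŝ_d a deterministic function of (X, X₁, Y, V), S independent of (U,A,X,X₁,Y), and the Markov chain structure of the hybrid scheme. If E[S ⊕ Ŝ_d] = 0 (zero Hamming distortion), then I(V; Y₁ | U A X₁ Y) = H(S) = 1. -/

import Mathlib

/-!
Zero distortion means `S = F (X, X₁, Y, V)` on the support. Given two outcomes `ω`, `ω'` of
positive probability with the same `(U, A, X₁, V)`, independence of `S` from `(U, A, X, X₁, Y)`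
yields a third outcome with `ω`'s `(U, A, X, X₁, Y)` and `ω'`'s state, and since the support of a
factorized law is closed under exchanging factors, the outcome with `ω`'s `(U, A, X, X₁, Y)`,
`ω'`'s state and the common `V` has positive probability too. The estimator therefore returns
both states at the same argument, so `(U, A, X₁, V)` determines `S` and `Y₁ = X₁ ⊕ S` is a
function of `(V, U, A, X₁, Y)`: `I(V; Y₁ | UAX₁Y) = H(Y₁ | UAX₁Y)`. Finally `Y₁` is the uniform
bit `S` shifted by `X₁`, hence a fair coin independent of `(U, A, X₁, Y)`, and that conditional
entropy is `1`.
-/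

open Finset
open scoped Classical

namespace ISAC

variable {Ω : Type*} [Fintype Ω]

/-- `p` is a probability mass function on the finite sample space `Ω`. -/
def IsPMF (p : Ω → ℝ) : Prop := (∀ ω, 0 ≤ p ω) ∧ ∑ ω, p ω = 1

/-- Probability that the random variable `X` takes the value `x`. -/
noncomputable def pr (p : Ω → ℝ) {α : Type*} (X : Ω → α) (x : α) : ℝ :=
  ∑ ω, if X ω = x then p ω else 0

/-- Shannon entropy (in bits) of the random variable `X`. -/
noncomputable def ent (p : Ω → ℝ) {α : Type*} [Fintype α] (X : Ω → α) : ℝ :=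
  -∑ x, pr p X x * Real.logb 2 (pr p X x)

/-- Conditional entropy `H(X | Z)`. -/
noncomputable def condEnt (p : Ω → ℝ) {α β : Type*} [Fintype α] [Fintype β] (X : Ω → α) (Z : Ω → β) : ℝ :=
  ent p (fun ω => (X ω, Z ω)) - ent p Z

/-- Mutual information `I(X;Y)`. -/
noncomputable def mi (p : Ω → ℝ) {α β : Type*} [Fintype α] [Fintype β] (X : Ω → α) (Y : Ω → β) : ℝ :=
  ent p X + ent p Y - ent p (fun ω => (X ω, Y ω))

/-- Conditional mutual information `I(X;Y|Z)`. -/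
noncomputable def cmi (p : Ω → ℝ) {α β γ : Type*} [Fintype α] [Fintype β] [Fintype γ] (X : Ω → α) (Y : Ω → β) (Z : Ω → γ) : ℝ :=
  ent p (fun ω => (X ω, Z ω)) + ent p (fun ω => (Y ω, Z ω))
    - ent p (fun ω => (X ω, Y ω, Z ω)) - ent p Z

/-- The Markov chain `A − B − C`: `A` and `C` are conditionally independent given `B`. -/
def Markov (p : Ω → ℝ) {α β γ : Type*} (A : Ω → α) (B : Ω → β) (C : Ω → γ) : Prop :=
  ∀ a b c, pr p (fun ω => (A ω, B ω, C ω)) (a, b, c) * pr p B b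
    = pr p (fun ω => (A ω, B ω)) (a, b) * pr p (fun ω => (B ω, C ω)) (b, c)

/-- Independence of the random variables `A` and `B`. -/
def IndepRV (p : Ω → ℝ) {α β : Type*} (A : Ω → α) (B : Ω → β) : Prop :=
  ∀ a b, pr p (fun ω => (A ω, B ω)) (a, b) = pr p A a * pr p B b

/-- Expectation of a real-valued function of the outcome. -/
noncomputable def expect (p : Ω → ℝ) (f : Ω → ℝ) : ℝ := ∑ ω, p ω * f ω

end ISAC

open ISAC

namespace ISAC

variable {Ω : Type*} [Fintype Ω] {p : Ω → ℝ}

lemma pr_nonneg (hp : ∀ ω, 0 ≤ p ω) {α : Type*} (X : Ω → α) (x : α) : 0 ≤ pr p X x :=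
  Finset.sum_nonneg fun ω _ => by split_ifs <;> simp [hp ω]

lemma sum_pr (hp : IsPMF p) {α : Type*} [Fintype α] (X : Ω → α) : ∑ x, pr p X x = 1 := by
  unfold pr
  rw [Finset.sum_comm, ← hp.2]
  exact Finset.sum_congr rfl fun ω _ => by simp

lemma pr_congr {α β : Type*} {X : Ω → α} {Y : Ω → β} {x : α} {y : β}
    (h : ∀ ω, X ω = x ↔ Y ω = y) : pr p X x = pr p Y y :=
  Finset.sum_congr rfl fun ω _ => by simp only [h ω]

lemma pr_comp {τ κ : Type*} [Fintype τ] (T : Ω → τ) (f : τ → κ) (c : κ) :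
    pr p (fun ω => f (T ω)) c = ∑ t, if f t = c then pr p T t else 0 := by
  unfold pr
  have hsplit : ∀ t, (if f t = c then ∑ ω, if T ω = t then p ω else 0 else 0)
      = ∑ ω, if f t = c ∧ T ω = t then p ω else 0 := fun t => by
    by_cases h : f t = c <;> simp [h]
  rw [Finset.sum_congr rfl fun t _ => hsplit t, Finset.sum_comm]
  refine Finset.sum_congr rfl fun ω _ => ?_
  rw [Finset.sum_eq_single (T ω)] <;> simp +contextual [eq_comm]

lemma exists_of_pr_ne_zero {α : Type*} {X : Ω → α} {x : α} (h : pr p X x ≠ 0) :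
    ∃ ω, p ω ≠ 0 ∧ X ω = x := by
  obtain ⟨ω, -, hω⟩ := Finset.exists_ne_zero_of_sum_ne_zero h
  by_cases hx : X ω = x
  · exact ⟨ω, by simpa [hx] using hω, hx⟩
  · simp [hx] at hω

lemma pr_apply_ne_zero (hp : ∀ ω, 0 ≤ p ω) {α : Type*} (X : Ω → α) {ω : Ω} (hω : p ω ≠ 0) :
    pr p X (X ω) ≠ 0 := by
  have hle : p ω ≤ pr p X (X ω) := by
    simpa [pr] using Finset.single_le_sum (f := fun ω' => if X ω' = X ω then p ω' else 0)
      (fun ω' _ => by split_ifs <;> simp [hp ω']) (Finset.mem_univ ω)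
  exact (((hp ω).lt_of_ne' hω).trans_le hle).ne'

lemma eq_zero_of_expect_eq_zero (hp : ∀ ω, 0 ≤ p ω) {f : Ω → ℝ} (hf : ∀ ω, 0 ≤ f ω)
    (h : expect p f = 0) {ω : Ω} (hω : p ω ≠ 0) : f ω = 0 := by
  have := (Finset.sum_eq_zero_iff_of_nonneg fun ω _ => mul_nonneg (hp ω) (hf ω)).mp h ω
    (Finset.mem_univ ω)
  exact (mul_eq_zero.mp this).resolve_left hω

lemma IndepRV.exists_of_pr_ne_zero (hp : ∀ ω, 0 ≤ p ω) {α β : Type*} {A : Ω → α} {B : Ω → β}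
    (hind : IndepRV p A B) {a : α} (ha : pr p A a ≠ 0) {ω : Ω} (hω : p ω ≠ 0) :
    ∃ ω', p ω' ≠ 0 ∧ A ω' = a ∧ B ω' = B ω := by
  have hpair : pr p (fun ω => (A ω, B ω)) (a, B ω) ≠ 0 := by
    rw [hind]
    exact mul_ne_zero ha (pr_apply_ne_zero hp B hω)
  obtain ⟨ω', hω', he⟩ := ISAC.exists_of_pr_ne_zero hpair
  exact ⟨ω', hω', (Prod.mk.inj he).1, (Prod.mk.inj he).2⟩

lemma IndepRV.pr_xor {β : Type*} {S : Ω → Bool} {W : Ω → β} (hind : IndepRV p S W)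
    (hS : ∀ s, pr p S s = 1 / 2) (c : β → Bool) (b : Bool) (w : β) :
    pr p (fun ω => (xor (c (W ω)) (S ω), W ω)) (b, w) = 1 / 2 * pr p W w := by
  rw [pr_congr (Y := fun ω => (S ω, W ω)) (y := (xor (c w) b, w)), hind, hS]
  intro ω
  simp only [Prod.mk.injEq]
  constructor <;> rintro ⟨h, rfl⟩ <;> refine ⟨?_, rfl⟩ <;> revert h <;>
    cases c (W ω) <;> cases S ω <;> cases b <;> decide

lemma pr_prod_comp_right {α β γ : Type*} [Fintype α] [Fintype β] {B : Ω → α} {W : Ω → β}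
    {q : α → ℝ} (h : ∀ a w, pr p (fun ω => (B ω, W ω)) (a, w) = q a * pr p W w)
    (π : β → γ) (a : α) (z : γ) :
    pr p (fun ω => (B ω, π (W ω))) (a, z) = q a * pr p (fun ω => π (W ω)) z := by
  rw [pr_comp (fun ω => (B ω, W ω)) (fun t => (t.1, π t.2)), pr_comp W π,
    Fintype.sum_prod_type, Finset.sum_eq_single a, Finset.mul_sum]
  · refine Finset.sum_congr rfl fun w _ => ?_
    simp only [Prod.mk.injEq, true_and, h]
    split_ifs <;> simp
  · intro a' _ ha'
    simp [ha']
  · simp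

lemma pr_eq_half_of_ent_eq_one (hp : IsPMF p) {S : Ω → Bool} (hS : ent p S = 1) (b : Bool) :
    pr p S b = 1 / 2 := by
  have hsum : pr p S true + pr p S false = 1 := by
    simpa only [Fintype.sum_bool] using sum_pr hp S
  set a := pr p S true with ha
  have hfalse : pr p S false = 1 - a := by linarith
  have hbin : Real.binEntropy a = Real.log 2 := by
    have hlog2 : Real.log 2 ≠ 0 := (Real.log_pos one_lt_two).ne'
    unfold ent Real.logb at hS
    rw [Fintype.sum_bool, hfalse, ← ha] at hS
    field_simp at hS
    rw [Real.binEntropy, Real.log_inv, Real.log_inv]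
    linarith
  have ha_half : a = 2⁻¹ := Real.binEntropy_eq_log_two.mp hbin
  cases b
  · rw [hfalse, ha_half]; norm_num
  · rw [← ha, ha_half]; norm_num

lemma ent_eq_of_injective {α β : Type*} [Fintype α] [Fintype β]
    {T : Ω → β} {R : Ω → α} {h : α → β} (hinj : Function.Injective h)
    (hTR : ∀ ω, p ω ≠ 0 → T ω = h (R ω)) : ent p T = ent p R := by
  have hpr : ∀ b, pr p T b = ∑ a, if h a = b then pr p R a else 0 := fun b => by
    rw [← pr_comp]
    refine Finset.sum_congr rfl fun ω _ => ?_
    by_cases hω : p ω = 0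
    · simp [hω]
    · rw [hTR ω hω]
  unfold ent
  congr 1
  simp only [hpr, Finset.sum_mul]
  rw [Finset.sum_comm]
  refine Finset.sum_congr rfl fun a _ => ?_
  rw [Finset.sum_eq_single (h a)]
  · simp [hinj.eq_iff]
  · intro b _ hb
    simp [Ne.symm hb]
  · simp

lemma mul_logb_half_mul {q : ℝ} (hq : 0 ≤ q) :
    1 / 2 * q * Real.logb 2 (1 / 2 * q) = (q * Real.logb 2 q - q) / 2 := by
  rcases hq.eq_or_lt with rfl | hq
  · simp
  · rw [show 1 / 2 * q = q / 2 by ring, Real.logb_div hq.ne' two_ne_zero,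
      Real.logb_self_eq_one one_lt_two]
    ring

lemma condEnt_eq_one_of_fair (hp : IsPMF p) {β : Type*} [Fintype β] {B : Ω → Bool} {Z : Ω → β}
    (h : ∀ b z, pr p (fun ω => (B ω, Z ω)) (b, z) = 1 / 2 * pr p Z z) :
    condEnt p B Z = 1 := by
  have hrow : ∀ b, ∑ z, pr p (fun ω => (B ω, Z ω)) (b, z)
        * Real.logb 2 (pr p (fun ω => (B ω, Z ω)) (b, z))
      = (∑ z, pr p Z z * Real.logb 2 (pr p Z z) - 1) / 2 := fun b => by
    simp only [h, mul_logb_half_mul (pr_nonneg hp.1 Z _)]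
    rw [← Finset.sum_div, Finset.sum_sub_distrib, sum_pr hp Z]
  rw [condEnt, ent, ent, Fintype.sum_prod_type, Fintype.sum_bool, hrow, hrow]
  ring

lemma cmi_eq_condEnt_of_determined {α β γ : Type*} [Fintype α] [Fintype β] [Fintype γ]
    [Nonempty β] {X : Ω → α} {Y : Ω → β} {Z : Ω → γ}
    (hdet : ∀ ω ω', p ω ≠ 0 → p ω' ≠ 0 → X ω = X ω' → Z ω = Z ω' → Y ω = Y ω') :
    cmi p X Y Z = condEnt p Y Z := by
  let g : α × γ → β := fun r =>
    if hr : ∃ ω, p ω ≠ 0 ∧ X ω = r.1 ∧ Z ω = r.2 then Y hr.choose else Classical.arbitrary β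
  have hg : ∀ ω, p ω ≠ 0 → Y ω = g (X ω, Z ω) := fun ω hω => by
    have hr : ∃ ω', p ω' ≠ 0 ∧ X ω' = X ω ∧ Z ω' = Z ω := ⟨ω, hω, rfl, rfl⟩
    obtain ⟨hω', hX, hZ⟩ := hr.choose_spec
    simp only [g, dif_pos hr]
    exact hdet ω _ hω hω' hX.symm hZ.symm
  have hXYZ : ent p (fun ω => (X ω, Y ω, Z ω)) = ent p (fun ω => (X ω, Z ω)) :=
    ent_eq_of_injective (h := fun r => (r.1, g r, r.2))
      (fun r r' he => Prod.ext (Prod.mk.inj he).1 (Prod.mk.inj (Prod.mk.inj he).2).2)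
      fun ω hω => by rw [hg ω hω]
  rw [cmi, condEnt, hXYZ]
  ring

end ISAC

section Stmt13

variable {Ω 𝒰 𝒜 𝒴 𝒱 : Type*} [Fintype Ω]
  [Fintype 𝒰] [Fintype 𝒜] [Fintype 𝒴] [Fintype 𝒱]

/-- The joint distribution of `(U, A, X, X₁, S, Y, Y₁, V)` factorizes as
`P_U P_{A|U} P_{X|UA} P_{X₁|U} P_S P_{YY₁|XX₁S} P_{V|UAX₁Y₁}`. -/
def Factorizes13 (p : Ω → ℝ) (U : Ω → 𝒰) (A : Ω → 𝒜) (X X₁ S : Ω → Bool)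
    (Y : Ω → 𝒴) (Y₁ : Ω → Bool) (V : Ω → 𝒱) : Prop :=
  ∃ (qU : 𝒰 → ℝ) (qA : 𝒰 → 𝒜 → ℝ) (qX : 𝒰 → 𝒜 → Bool → ℝ) (qX₁ : 𝒰 → Bool → ℝ)
    (qS : Bool → ℝ) (qYY₁ : Bool → Bool → Bool → 𝒴 × Bool → ℝ)
    (qV : 𝒰 → 𝒜 → Bool → Bool → 𝒱 → ℝ),
    (∀ u, 0 ≤ qU u) ∧ (∑ u, qU u = 1) ∧
    (∀ u a, 0 ≤ qA u a) ∧ (∀ u, ∑ a, qA u a = 1) ∧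
    (∀ u a x, 0 ≤ qX u a x) ∧ (∀ u a, ∑ x, qX u a x = 1) ∧
    (∀ u x₁, 0 ≤ qX₁ u x₁) ∧ (∀ u, ∑ x₁, qX₁ u x₁ = 1) ∧
    (∀ s, 0 ≤ qS s) ∧ (∑ s, qS s = 1) ∧
    (∀ x x₁ s z, 0 ≤ qYY₁ x x₁ s z) ∧ (∀ x x₁ s, ∑ z, qYY₁ x x₁ s z = 1) ∧
    (∀ u a x₁ y₁ v, 0 ≤ qV u a x₁ y₁ v) ∧ (∀ u a x₁ y₁, ∑ v, qV u a x₁ y₁ v = 1) ∧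
    ∀ u a x x₁ s y y₁ v,
      pr p (fun ω => (U ω, A ω, X ω, X₁ ω, S ω, Y ω, Y₁ ω, V ω)) (u, a, x, x₁, s, y, y₁, v)
        = qU u * qA u a * qX u a x * qX₁ u x₁ * qS s * qYY₁ x x₁ s (y, y₁)
            * qV u a x₁ y₁ v

namespace Factorizes13

variable {p : Ω → ℝ} {U : Ω → 𝒰} {A : Ω → 𝒜} {X X₁ S : Ω → Bool} {Y : Ω → 𝒴} {Y₁ : Ω → Bool}
  {V : Ω → 𝒱}

lemma pr_splice (hfac : Factorizes13 p U A X X₁ S Y Y₁ V)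
    {u u'' : 𝒰} {a a'' : 𝒜} {x x' x₁ s s' : Bool} {y y' : 𝒴} {y₁ y₁' : Bool} {v v' v'' : 𝒱}
    (h : pr p (fun ω => (U ω, A ω, X ω, X₁ ω, S ω, Y ω, Y₁ ω, V ω))
      (u, a, x, x₁, s, y, y₁, v) ≠ 0)
    (h' : pr p (fun ω => (U ω, A ω, X ω, X₁ ω, S ω, Y ω, Y₁ ω, V ω))
      (u, a, x', x₁, s', y', y₁', v') ≠ 0)
    (h'' : pr p (fun ω => (U ω, A ω, X ω, X₁ ω, S ω, Y ω, Y₁ ω, V ω))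
      (u'', a'', x, x₁, s', y, y₁', v'') ≠ 0) :
    pr p (fun ω => (U ω, A ω, X ω, X₁ ω, S ω, Y ω, Y₁ ω, V ω))
      (u, a, x, x₁, s', y, y₁', v') ≠ 0 := by
  obtain ⟨_, _, _, _, _, _, _, -, -, -, -, -, -, -, -, -, -, -, -, -, -, hjoint⟩ := hfac
  simp only [hjoint, ne_eq, mul_eq_zero, not_or] at h h' h'' ⊢
  tauto

lemma state_eq_of_zero_distortion (hp : ∀ ω, 0 ≤ p ω) (hfac : Factorizes13 p U A X X₁ S Y Y₁ V)
    (hY₁ : ∀ ω, Y₁ ω = xor (X₁ ω) (S ω)) (hS : ∀ s, pr p S s ≠ 0)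
    (hSindep : IndepRV p S (fun ω => (U ω, A ω, X ω, X₁ ω, Y ω)))
    {F : Bool × Bool × 𝒴 × 𝒱 → Bool} (hF : ∀ ω, p ω ≠ 0 → S ω = F (X ω, X₁ ω, Y ω, V ω))
    {ω ω' : Ω} (hω : p ω ≠ 0) (hω' : p ω' ≠ 0) (hU : U ω = U ω') (hA : A ω = A ω')
    (hX₁ : X₁ ω = X₁ ω') (hV : V ω = V ω') : S ω = S ω' := by
  obtain ⟨ω'', hω'', hS'', hW''⟩ := hSindep.exists_of_pr_ne_zero hp (hS (S ω')) hω
  simp only [Prod.mk.injEq] at hW''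
  obtain ⟨-, -, hX'', hX₁'', hY''⟩ := hW''
  have hY₁'' : Y₁ ω'' = Y₁ ω' := by rw [hY₁, hY₁, hX₁'', hS'', hX₁]
  have hpos := fun {ω₁} (h₁ : p ω₁ ≠ 0) => pr_apply_ne_zero hp
    (fun ω => (U ω, A ω, X ω, X₁ ω, S ω, Y ω, Y₁ ω, V ω)) h₁
  have hsplice := hfac.pr_splice (hpos hω)
    (by simpa only [hU, hA, hX₁] using hpos hω')
    (by simpa only [hX'', hX₁'', hS'', hY'', hY₁''] using hpos hω'')
  obtain ⟨ω₀, hω₀, hT₀⟩ := exists_of_pr_ne_zero hsplice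
  simp only [Prod.mk.injEq] at hT₀
  obtain ⟨-, -, hX₀, hX₁₀, hS₀, hY₀, -, hV₀⟩ := hT₀
  have hF₀ := hF ω₀ hω₀
  rw [hX₀, hX₁₀, hS₀, hY₀, hV₀, ← hV] at hF₀
  exact (hF ω hω).trans hF₀.symm

end Factorizes13

/-- For the hybrid scheme with `Y₁ = X₁ ⊕ S`, uniform `S` (`H(S) = 1`) independent of
`(U,A,X,X₁,Y)`, and `Ŝ_d = F(X,X₁,Y,V)` a deterministic estimator: if the expected Hamming
distortion is zero, then `I(V;Y₁|UAX₁Y) = H(S) = 1`. -/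
theorem stmt_13 (p : Ω → ℝ) (hp : IsPMF p)
    (U : Ω → 𝒰) (A : Ω → 𝒜) (X X₁ S : Ω → Bool) (Y : Ω → 𝒴) (Y₁ : Ω → Bool) (V : Ω → 𝒱)
    (hfac : Factorizes13 p U A X X₁ S Y Y₁ V)
    (hY₁ : ∀ ω, Y₁ ω = Bool.xor (X₁ ω) (S ω))
    (hS : ent p S = 1)
    (hSindep : IndepRV p S (fun ω => (U ω, A ω, X ω, X₁ ω, Y ω)))
    (F : Bool × Bool × 𝒴 × 𝒱 → Bool)
    (hdist : expect p
        (fun ω => if Bool.xor (S ω) (F (X ω, X₁ ω, Y ω, V ω)) then 1 else 0) = 0) :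
    cmi p V Y₁ (fun ω => (U ω, A ω, X₁ ω, Y ω)) = ent p S ∧ ent p S = 1 := by
  have hS_half : ∀ s, pr p S s = 1 / 2 := pr_eq_half_of_ent_eq_one hp hS
  have hS_ne : ∀ s, pr p S s ≠ 0 := fun s => by norm_num [hS_half]
  have hF : ∀ ω, p ω ≠ 0 → S ω = F (X ω, X₁ ω, Y ω, V ω) := fun ω hω => by
    simpa using eq_zero_of_expect_eq_zero hp.1 (fun ω => by split_ifs <;> norm_num) hdist hω
  have hY₁_det : ∀ ω ω', p ω ≠ 0 → p ω' ≠ 0 → V ω = V ω' →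
      (U ω, A ω, X₁ ω, Y ω) = (U ω', A ω', X₁ ω', Y ω') → Y₁ ω = Y₁ ω' := by
    intro ω ω' hω hω' hV hZ
    simp only [Prod.mk.injEq] at hZ
    obtain ⟨hU, hA, hX₁, -⟩ := hZ
    rw [hY₁, hY₁, hX₁,
      hfac.state_eq_of_zero_distortion hp.1 hY₁ hS_ne hSindep hF hω hω' hU hA hX₁ hV]
  have hY₁_fair : ∀ b z, pr p (fun ω => (Y₁ ω, (U ω, A ω, X₁ ω, Y ω))) (b, z)
      = 1 / 2 * pr p (fun ω => (U ω, A ω, X₁ ω, Y ω)) z := by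
    rw [show Y₁ = fun ω => xor (X₁ ω) (S ω) from funext hY₁]
    exact pr_prod_comp_right (hSindep.pr_xor hS_half fun w => w.2.2.2.1)
      fun w => (w.1, w.2.1, w.2.2.2.1, w.2.2.2.2)
  rw [cmi_eq_condEnt_of_determined hY₁_det, condEnt_eq_one_of_fair hp hY₁_fair, hS]
  exact ⟨rfl, rfl⟩

end Stmt13
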